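/- Let λ > −1/2 with λ ≠ 0 and let n ≥ 2 be an integer. Then for every x > 0 the derivative of the normalized Turán function has the sign of λ: λ · φ_{n,λ}′(x) > 0; equivalently, φ_{n,λ} is strictly increasing on [0, ∞) when λ > 0 and strictly decreasing on [0, ∞) when −1/2 < λ < 0. -/

import Mathlib

/-!
Writing `Δₙ = (1 - x²) φₙ`, the three-term recurrence gives
`(n-1)(n-1+2λ)²(n+2λ) Δₙ = 2(n-1+λ)(1-x²) Eₙ₋₁ + (n-1)²(n-2)(n-1+2λ) Δₙ₋₂`,
where `Eₘ = m(m+2λ) pₘ² + (1-x²) pₘ'²` is Sonin's function, and the differential equation of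
`pₘ` gives `Eₘ' = 4λx pₘ'²`. Dividing by `1 - x²`, `λ φₙ'` is a positive combination
of `λ² x pₙ₋₁'²` and `λ φₙ₋₂'`. Since `φ₁` is constant, `φ₂ = (1 + 2λx²)/(1 + 2λ)²` and
`p₂'(x) > 0` for `x > 0`, induction gives `λ φₙ'(x) > 0`.
-/

open Polynomial

/-- The recurrence is taken at `m = k + 1`, which avoids the truncated subtraction `m - 1`. -/
structure IsUltraspherical (l : ℝ) (p : ℕ → ℝ[X]) : Prop where
  zero : p 0 = 1
  one : p 1 = X
  succ_succ : ∀ k : ℕ, ((k : ℝ[X]) + 1 + 2 * C l) * p (k + 2)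
    = 2 * ((k : ℝ[X]) + 1 + C l) * X * p (k + 1) - ((k : ℝ[X]) + 1) * p k

noncomputable def sonin (l : ℝ) (p : ℕ → ℝ[X]) (m : ℕ) : ℝ[X] :=
  (m : ℝ[X]) * ((m : ℝ[X]) + 2 * C l) * p m ^ 2 + (1 - X ^ 2) * derivative (p m) ^ 2

/-- Indices are shifted by one: `turanDet p k` is `Δ_{k+1}` and `turanFun l p k` is `φ_{k+1}`. -/
def turanDet {R : Type*} [CommRing R] (p : ℕ → R) (k : ℕ) : R :=
  p (k + 1) ^ 2 - p k * p (k + 2)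

/-- The recursion is `mul_turanDet_add_two` divided by `1 - X ^ 2`. -/
noncomputable def turanFun (l : ℝ) (p : ℕ → ℝ[X]) : ℕ → ℝ[X]
  | 0 => C (1 + 2 * l)⁻¹
  | 1 => C ((1 + 2 * l) ^ 2)⁻¹ * sonin l p 1
  | k + 2 => C ((((k : ℝ) + 2) * ((k : ℝ) + 2 + 2 * l) ^ 2 * ((k : ℝ) + 3 + 2 * l))⁻¹) *
      (2 * ((k : ℝ[X]) + 2 + C l) * sonin l p (k + 2)
        + ((k : ℝ[X]) + 2) ^ 2 * ((k : ℝ[X]) + 1) * ((k : ℝ[X]) + 2 + 2 * C l) * turanFun l p k)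

theorem Polynomial.one_sub_X_sq_ne_zero {R : Type*} [CommRing R] [Nontrivial R] :
    (1 - X ^ 2 : R[X]) ≠ 0 := fun h => by
  simpa using congrArg (eval 0) h

theorem natCast_add_two_mul_C_ne_zero {l : ℝ} (hl : -(1 / 2) < l) (a : ℕ) (ha : 1 ≤ a) :
    ((a : ℝ[X]) + 2 * C l) ≠ 0 := by
  have : ((a : ℝ[X]) + 2 * C l) = C ((a : ℝ) + 2 * l) := by
    simp only [map_add, map_mul, map_natCast, map_ofNat]
  rw [this, Ne, C_eq_zero]
  have : (1 : ℝ) ≤ a := by exact_mod_cast ha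
  linarith

theorem mul_C_inv_mul_eq {K : Type*} [Field K] {r : K} (hr : r ≠ 0) {a b c : K[X]}
    (h : C r * c = a * b) : a * (C r⁻¹ * b) = c := by
  rw [mul_left_comm, ← h, ← mul_assoc, ← C_mul, inv_mul_cancel₀ hr, C_1, one_mul]

namespace IsUltraspherical

variable {l : ℝ} {p : ℕ → ℝ[X]}

theorem of_eval (hp0 : p 0 = 1) (hp1 : p 1 = X)
    (hrec : ∀ m : ℕ, 1 ≤ m → ∀ x : ℝ, ((m : ℝ) + 2 * l) * (p (m + 1)).eval x
      = 2 * ((m : ℝ) + l) * x * (p m).eval x - (m : ℝ) * (p (m - 1)).eval x) :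
    IsUltraspherical l p := by
  refine ⟨hp0, hp1, fun k => Polynomial.funext fun x => ?_⟩
  have h := hrec (k + 1) k.succ_pos x
  push_cast at h
  simp only [eval_mul, eval_sub, eval_add, eval_natCast, eval_C, eval_X, eval_one, eval_ofNat]
  simpa [add_assoc] using h

theorem derivative_succ_succ (hp : IsUltraspherical l p) (k : ℕ) :
    ((k : ℝ[X]) + 1 + 2 * C l) * derivative (p (k + 2))
      = 2 * ((k : ℝ[X]) + 1 + C l) * (p (k + 1) + X * derivative (p (k + 1)))
        - ((k : ℝ[X]) + 1) * derivative (p k) := by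
  have h := congrArg derivative (hp.succ_succ k)
  simp only [derivative_mul, derivative_sub, derivative_add, derivative_natCast, derivative_one,
    derivative_C, derivative_X, derivative_ofNat] at h
  linear_combination h

theorem one_sub_X_sq_mul_derivative (hp : IsUltraspherical l p) (hl : -(1 / 2) < l) (m : ℕ) :
    (1 - X ^ 2) * derivative (p m) = ((m : ℝ[X]) + 2 * C l) * (X * p m - p (m + 1)) := by
  induction m using Nat.twoStepInduction with
  | zero => simp [hp.zero, hp.one]
  | one =>
    have h := hp.succ_succ 0
    simp only [hp.zero, hp.one, Nat.cast_zero, zero_add, derivative_X] at h ⊢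
    linear_combination h
  | more k ih₀ ih₁ =>
    refine mul_left_cancel₀ (natCast_add_two_mul_C_ne_zero hl (k + 1) k.succ_pos') ?_
    have h₀ := hp.succ_succ k
    have h₁ := hp.succ_succ (k + 1)
    push_cast at ih₁ h₁ ⊢
    linear_combination (1 - X ^ 2) * hp.derivative_succ_succ k
      + 2 * ((k : ℝ[X]) + 1 + C l) * X * ih₁ - ((k : ℝ[X]) + 1) * ih₀
      - ((k : ℝ[X]) + 2 * C l) * X * h₀ + ((k : ℝ[X]) + 1 + 2 * C l) * h₁

theorem one_sub_X_sq_mul_derivative_derivative (hp : IsUltraspherical l p) (hl : -(1 / 2) < l)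
    (m : ℕ) :
    (1 - X ^ 2) * derivative (derivative (p m))
      = (2 * C l + 1) * X * derivative (p m) - (m : ℝ[X]) * ((m : ℝ[X]) + 2 * C l) * p m := by
  refine mul_left_cancel₀ one_sub_X_sq_ne_zero ?_
  have hD := hp.one_sub_X_sq_mul_derivative hl m
  have hD' := congrArg derivative hD
  have hD₁ := hp.one_sub_X_sq_mul_derivative hl (m + 1)
  have hrec := hp.succ_succ m
  simp only [derivative_mul, derivative_sub, derivative_add, derivative_natCast, derivative_one,
    derivative_C, derivative_X, derivative_ofNat, derivative_X_pow, Nat.cast_ofNat,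
    map_ofNat] at hD'
  push_cast at hD₁
  linear_combination (1 - X ^ 2) * hD' + ((m : ℝ[X]) + 1) * X * hD
    - ((m : ℝ[X]) + 2 * C l) * hD₁ + ((m : ℝ[X]) + 2 * C l) * hrec

theorem derivative_sonin (hp : IsUltraspherical l p) (hl : -(1 / 2) < l) (m : ℕ) :
    derivative (sonin l p m) = 4 * C l * X * derivative (p m) ^ 2 := by
  simp only [sonin, derivative_mul, derivative_add, derivative_sub, derivative_natCast,
    derivative_one, derivative_C, derivative_X, derivative_ofNat, derivative_pow,
    Nat.cast_ofNat, map_ofNat]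
  linear_combination 2 * derivative (p m) * hp.one_sub_X_sq_mul_derivative_derivative hl m

theorem one_sub_X_sq_mul_sonin (hp : IsUltraspherical l p) (hl : -(1 / 2) < l) (m : ℕ) :
    (1 - X ^ 2) * sonin l p m = ((m : ℝ[X]) + 2 * C l) * ((m : ℝ[X]) * (1 - X ^ 2) * p m ^ 2
      + ((m : ℝ[X]) + 2 * C l) * (X * p m - p (m + 1)) ^ 2) := by
  have hD := hp.one_sub_X_sq_mul_derivative hl m
  rw [sonin]
  linear_combination ((1 - X ^ 2) * derivative (p m)
    + ((m : ℝ[X]) + 2 * C l) * (X * p m - p (m + 1))) * hD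

theorem mul_turanDet_add_two (hp : IsUltraspherical l p) (hl : -(1 / 2) < l) (k : ℕ) :
    ((k : ℝ[X]) + 2) * ((k : ℝ[X]) + 2 + 2 * C l) ^ 2 * ((k : ℝ[X]) + 3 + 2 * C l)
        * turanDet p (k + 2)
      = 2 * ((k : ℝ[X]) + 2 + C l) * ((1 - X ^ 2) * sonin l p (k + 2))
        + ((k : ℝ[X]) + 2) ^ 2 * ((k : ℝ[X]) + 1) * ((k : ℝ[X]) + 2 + 2 * C l) * turanDet p k := by
  have hE := hp.one_sub_X_sq_mul_sonin hl (k + 2)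
  have h₀ := hp.succ_succ k
  have h₁ := hp.succ_succ (k + 1)
  have h₂ := hp.succ_succ (k + 2)
  push_cast at hE h₁ h₂
  rw [hE, turanDet, turanDet]
  linear_combination ((k : ℝ[X]) + 2 + 2 * C l) * ((((k : ℝ[X]) + 2) ^ 2 * p (k + 2)) * h₀
    + (-(((k : ℝ[X]) + 2) * ((k : ℝ[X]) + 1) * p (k + 1)) + 2 * C l * X * p (k + 2)
        + ((k : ℝ[X]) + 1) * ((k : ℝ[X]) + 2 + 2 * C l) * p (k + 3)) * h₁
    - (((k : ℝ[X]) + 2) * ((k : ℝ[X]) + 2 + 2 * C l) * p (k + 2)) * h₂)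

theorem mul_turanDet_zero (hp : IsUltraspherical l p) :
    (1 + 2 * C l) * turanDet p 0 = 1 - X ^ 2 := by
  have h := hp.succ_succ 0
  simp only [turanDet, hp.zero, hp.one, Nat.cast_zero, zero_add] at h ⊢
  linear_combination -h

theorem mul_turanDet_one (hp : IsUltraspherical l p) (hl : -(1 / 2) < l) :
    (1 + 2 * C l) ^ 2 * turanDet p 1 = (1 - X ^ 2) * sonin l p 1 := by
  refine mul_left_cancel₀ (natCast_add_two_mul_C_ne_zero hl 2 one_le_two) ?_
  have h₀ := hp.succ_succ 0
  have h₁ := hp.succ_succ 1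
  simp only [turanDet, sonin, hp.zero, hp.one, derivative_X, Nat.cast_zero, Nat.cast_one,
    zero_add, Nat.reduceAdd] at h₀ h₁ ⊢
  linear_combination ((2 + 2 * C l) * ((1 + 2 * C l) * p 2 + 2 * (1 + C l) * X ^ 2 - 1)
    - 2 * (2 + C l) * (1 + 2 * C l) * X ^ 2) * h₀ - (1 + 2 * C l) ^ 2 * X * h₁

theorem one_sub_X_sq_mul_turanFun (hp : IsUltraspherical l p) (hl : -(1 / 2) < l) (k : ℕ) :
    (1 - X ^ 2) * turanFun l p k = turanDet p k := by
  induction k using Nat.twoStepInduction with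
  | zero =>
    have h : C (1 + 2 * l) * turanDet p 0 = (1 - X ^ 2) * 1 := by
      simpa only [map_add, map_mul, map_one, map_ofNat, mul_one] using hp.mul_turanDet_zero
    simpa only [turanFun, mul_one] using mul_C_inv_mul_eq (by linarith) h
  | one =>
    have h : C ((1 + 2 * l) ^ 2) * turanDet p 1 = (1 - X ^ 2) * sonin l p 1 := by
      simpa only [map_add, map_mul, map_pow, map_one, map_ofNat] using hp.mul_turanDet_one hl
    exact mul_C_inv_mul_eq (pow_ne_zero 2 (by linarith)) h
  | more k ih₀ _ =>
    have hD : ((k : ℝ) + 2) * ((k : ℝ) + 2 + 2 * l) ^ 2 * ((k : ℝ) + 3 + 2 * l) ≠ 0 := by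
      have : (0 : ℝ) ≤ k := k.cast_nonneg
      have : 0 < (k : ℝ) + 2 + 2 * l := by linarith
      have : 0 < (k : ℝ) + 3 + 2 * l := by linarith
      positivity
    refine mul_C_inv_mul_eq hD ?_
    simp only [map_add, map_mul, map_pow, map_natCast, map_ofNat]
    linear_combination hp.mul_turanDet_add_two hl k
      - ((k : ℝ[X]) + 2) ^ 2 * ((k : ℝ[X]) + 1) * ((k : ℝ[X]) + 2 + 2 * C l) * ih₀

theorem mul_eval_derivative_turanFun_add_two (hp : IsUltraspherical l p) (hl : -(1 / 2) < l)
    (k : ℕ) (x : ℝ) :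
    l * (derivative (turanFun l p (k + 2))).eval x
      = (((k : ℝ) + 2) * ((k : ℝ) + 2 + 2 * l) ^ 2 * ((k : ℝ) + 3 + 2 * l))⁻¹ *
        (8 * ((k : ℝ) + 2 + l) * l ^ 2 * x * (derivative (p (k + 2))).eval x ^ 2
          + ((k : ℝ) + 2) ^ 2 * ((k : ℝ) + 1) * ((k : ℝ) + 2 + 2 * l)
            * (l * (derivative (turanFun l p k)).eval x)) := by
  rw [turanFun]
  simp only [derivative_add, derivative_mul, derivative_pow, derivative_natCast, derivative_one,
    derivative_C, derivative_ofNat, hp.derivative_sonin hl, eval_mul, eval_add, eval_C,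
    eval_natCast, eval_ofNat, eval_pow, eval_X, eval_zero, eval_one]
  ring

theorem mul_eval_derivative_turanFun_pos (hp : IsUltraspherical l p) (hl : -(1 / 2) < l)
    (hl₀ : l ≠ 0) (k : ℕ) {x : ℝ} (hx : 0 < x) :
    0 < l * (derivative (turanFun l p (k + 1))).eval x := by
  have hcoef : ∀ k : ℕ,
      0 < (((k : ℝ) + 2) * ((k : ℝ) + 2 + 2 * l) ^ 2 * ((k : ℝ) + 3 + 2 * l))⁻¹ ∧
      0 < 8 * ((k : ℝ) + 2 + l) * l ^ 2 * x ∧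
      0 < ((k : ℝ) + 2) ^ 2 * ((k : ℝ) + 1) * ((k : ℝ) + 2 + 2 * l) := fun k => by
    have : (0 : ℝ) ≤ k := k.cast_nonneg
    have : 0 < (k : ℝ) + 2 + 2 * l := by linarith
    have : 0 < (k : ℝ) + 3 + 2 * l := by linarith
    have : 0 < (k : ℝ) + 2 + l := by linarith
    exact ⟨by positivity, by positivity, by positivity⟩
  induction k using Nat.twoStepInduction with
  | zero =>
    simp only [turanFun, derivative_C_mul, hp.derivative_sonin hl, hp.one, derivative_X, eval_mul,
      eval_C, eval_X, eval_pow, eval_one, eval_ofNat]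
    have hl₁ : 1 + 2 * l ≠ 0 := by linarith
    rw [show l * (((1 + 2 * l) ^ 2)⁻¹ * (4 * l * x * 1 ^ 2)) = 4 * l ^ 2 * x / (1 + 2 * l) ^ 2 by
      ring]
    positivity
  | one =>
    have hp₂ := congrArg (eval x) (hp.derivative_succ_succ 0)
    simp only [hp.zero, hp.one, derivative_one, derivative_X, Nat.cast_zero, zero_add, eval_mul,
      eval_add, eval_sub, eval_C, eval_X, eval_one, eval_zero, eval_ofNat] at hp₂
    have hp₂_pos : 0 < (derivative (p 2)).eval x := by nlinarith
    obtain ⟨hD, hE, -⟩ := hcoef 0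
    rw [hp.mul_eval_derivative_turanFun_add_two hl 0]
    simp only [turanFun, derivative_C, eval_zero, mul_zero, add_zero]
    exact mul_pos hD (mul_pos hE (pow_pos hp₂_pos 2))
  | more k ih _ =>
    obtain ⟨hD, hE, hF⟩ := hcoef (k + 1)
    rw [hp.mul_eval_derivative_turanFun_add_two hl (k + 1)]
    exact mul_pos hD (add_pos_of_nonneg_of_pos (mul_nonneg hE.le (sq_nonneg _)) (mul_pos hF ih))

end IsUltraspherical

/-- For `l > -1/2`, `l ≠ 0`, `n ≥ 2`, and any `x > 0`, the derivative of the normalized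
Turán function has the sign of `l`: `l * φ′(x) > 0`. -/
theorem turan_normalized_derivative_sign
    (l : ℝ) (hl : -(1/2 : ℝ) < l) (hl0 : l ≠ 0) (n : ℕ) (hn : 2 ≤ n)
    (p : ℕ → Polynomial ℝ)
    (hp0 : p 0 = 1) (hp1 : p 1 = Polynomial.X)
    (hrec : ∀ m : ℕ, 1 ≤ m → ∀ x : ℝ,
      ((m : ℝ) + 2 * l) * (p (m + 1)).eval x
        = 2 * ((m : ℝ) + l) * x * (p m).eval x - (m : ℝ) * (p (m - 1)).eval x)
    (φ : Polynomial ℝ)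
    (hφ : ∀ x : ℝ, (1 - x ^ 2) * φ.eval x
        = ((p n).eval x) ^ 2 - (p (n - 1)).eval x * (p (n + 1)).eval x) :
    ∀ x : ℝ, 0 < x → 0 < l * (Polynomial.derivative φ).eval x := by
  have hp := IsUltraspherical.of_eval hp0 hp1 hrec
  obtain ⟨k, rfl⟩ : ∃ k, n = k + 2 := ⟨n - 2, by omega⟩
  have hφ_eq : φ = turanFun l p (k + 1) := by
    refine mul_left_cancel₀ one_sub_X_sq_ne_zero ?_
    rw [hp.one_sub_X_sq_mul_turanFun hl (k + 1)]
    refine Polynomial.funext fun x => ?_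
    simpa [turanDet] using hφ x
  intro x hx
  rw [hφ_eq]
  exact hp.mul_eval_derivative_turanFun_pos hl hl0 k hx
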